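/- arXiv:2309.13740 — 3 statements merged into one kernel-verified Lean document; each statement's English description precedes it below -/
import Mathlib

section
/- Let V be a finite-dimensional real representation of a finite group G. Then V admits a G-equivariant complex structure (an ℝG-endomorphism J with J² = -id) if and only if every absolutely irreducible ℝG-component of V occurs with even multiplicity. -/
/-!
A complex structure `J` on `V` induces one on every real vector space `Hom_A(S, V)` by
composition, so these spaces have even dimension.

Conversely, split off a simple summand `S` of `V` and induct on `dim V`. If `End_A(S) ≠ ℝ`, then
`End_A(S)` is a finite-dimensional real division algebra strictly larger than `ℝ`, so it contains
a square root of `-1`, which is a complex structure on `S`; moreover no absolutely irreducible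
module maps nontrivially to `S`, so the complement of `S` again has even multiplicities. If
`End_A(S) = ℝ`, then `dim Hom_A(S, V)` is even and `dim Hom_A(S, S) = 1`, so the complement contains
a second copy of `S`, and `S × S` carries the complex structure `(x, y) ↦ (-y, x)`.
-/

open Module Polynomial

def HasComplexStructure (A V : Type*) [Ring A] [AddCommGroup V] [Module A V] : Prop :=
  ∃ J : V →ₗ[A] V, J ∘ₗ J = -LinearMap.id

/-- For `S` absolutely irreducible, `finrank ℝ (S →ₗ[A] V)` is the multiplicity of `S` in `V`. -/
def EvenMultiplicities (A : Type*) [Ring A] [Algebra ℝ A] (V : Type*) [AddCommGroup V]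
    [Module ℝ V] [Module A V] [SMulCommClass A ℝ V] : Prop :=
  ∀ (S : Type) [AddCommGroup S] [Module ℝ S] [Module A S] [IsScalarTower ℝ A S]
    [SMulCommClass A ℝ S] [FiniteDimensional ℝ S],
    IsSimpleModule A S → (∀ f : S →ₗ[A] S, ∃ c : ℝ, f = c • LinearMap.id) →
    Even (finrank ℝ (S →ₗ[A] V))

namespace HasComplexStructure

variable {A P Q : Type*} [Ring A] [AddCommGroup P] [Module A P] [AddCommGroup Q] [Module A Q]

theorem of_linearEquiv (e : P ≃ₗ[A] Q) (hP : HasComplexStructure A P) :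
    HasComplexStructure A Q := by
  obtain ⟨J, hJ⟩ := hP
  refine ⟨e.toLinearMap ∘ₗ J ∘ₗ e.symm.toLinearMap, LinearMap.ext fun x => ?_⟩
  simpa using congr(e ($hJ (e.symm x)))

theorem prod (hP : HasComplexStructure A P) (hQ : HasComplexStructure A Q) :
    HasComplexStructure A (P × Q) := by
  obtain ⟨J, hJ⟩ := hP
  obtain ⟨K, hK⟩ := hQ
  exact ⟨J.prodMap K, by rw [LinearMap.prodMap_comp, hJ, hK]; ext <;> simp⟩

end HasComplexStructure

theorem hasComplexStructure_prod_self {A P : Type*} [Ring A] [AddCommGroup P] [Module A P] :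
    HasComplexStructure A (P × P) :=
  ⟨(-LinearMap.snd A P P).prod (LinearMap.fst A P P), by ext <;> simp⟩

theorem HasComplexStructure.even_finrank {V : Type*} [AddCommGroup V] [Module ℝ V]
    [FiniteDimensional ℝ V] (h : HasComplexStructure ℝ V) : Even (finrank ℝ V) := by
  obtain ⟨J, hJ⟩ := h
  have hdet : LinearMap.det J * LinearMap.det J = (-1) ^ finrank ℝ V := by
    rw [← LinearMap.det_comp, hJ, ← neg_one_smul ℝ LinearMap.id, LinearMap.det_smul,
      LinearMap.det_id, mul_one]
  by_contra hodd
  rw [(Nat.not_even_iff_odd.mp hodd).neg_one_pow] at hdet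
  nlinarith [mul_self_nonneg (LinearMap.det J)]

theorem exists_mul_self_eq_neg_one {B : Type*} [Ring B] [IsDomain B] [Algebra ℝ B]
    [FiniteDimensional ℝ B] {d : B} (hd : d ∉ (algebraMap ℝ B).range) : ∃ j : B, j * j = -1 := by
  have hint : IsIntegral ℝ d := .of_finite ℝ d
  obtain ⟨z, hz⟩ : ∃ z : ℂ, aeval z (minpoly ℝ d) = 0 :=
    IsAlgClosed.exists_aeval_eq_zero ℂ _ (minpoly.degree_pos hint).ne'
  have hpz : minpoly ℝ d = minpoly ℝ z :=
    minpoly.eq_of_irreducible_of_monic (minpoly.irreducible hint) hz (minpoly.monic hint)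
  have him : z.im ≠ 0 := by
    intro h
    refine hd (minpoly.natDegree_eq_one_iff.mp ?_)
    rw [hpz, minpoly.natDegree_eq_one_iff]
    exact ⟨z.re, Complex.ext (by simp) (by simp [h])⟩
  -- `q` sends the non-real root `z` of the minimal polynomial to `i`, so `q(d)² = -1`.
  set q : ℝ[X] := C z.im⁻¹ * (X - C z.re)
  have hq : aeval z q = Complex.I := by
    apply Complex.ext <;> simp [q, him]
  obtain ⟨r, hr⟩ : minpoly ℝ d ∣ q * q + 1 := hpz ▸ minpoly.dvd ℝ z (by simp [hq])
  refine ⟨aeval d q, eq_neg_of_add_eq_zero_left ?_⟩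
  simpa [minpoly.aeval] using congr(aeval d $hr)

theorem finrank_linearMap_self_eq_one {A S : Type*} [Ring A] [AddCommGroup S] [Module ℝ S]
    [Module A S] [SMulCommClass A ℝ S] [Nontrivial S]
    (hS : ∀ f : S →ₗ[A] S, ∃ c : ℝ, f = c • LinearMap.id) : finrank ℝ (S →ₗ[A] S) = 1 :=
  (finrank_eq_one_iff_of_nonzero' (1 : Module.End A S) one_ne_zero).mpr
    fun f => (hS f).imp fun _ h => h.symm

theorem finrank_lt_of_prod_linearEquiv {A P Q V : Type*} [Ring A] [Algebra ℝ A]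
    [AddCommGroup P] [Module ℝ P] [Module A P] [IsScalarTower ℝ A P]
    [AddCommGroup Q] [Module ℝ Q] [Module A Q] [IsScalarTower ℝ A Q]
    [AddCommGroup V] [Module ℝ V] [Module A V] [IsScalarTower ℝ A V]
    [Nontrivial P] [FiniteDimensional ℝ P] [FiniteDimensional ℝ Q] (e : (P × Q) ≃ₗ[A] V) :
    finrank ℝ Q < finrank ℝ V := by
  rw [← (e.restrictScalars ℝ).finrank_eq, finrank_prod]
  have : 0 < finrank ℝ P := finrank_pos
  omega

section

variable {A : Type*} [Ring A] [Algebra ℝ A]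

instance Submodule.finiteDimensional_of_isScalarTower {V : Type*} [AddCommGroup V] [Module ℝ V]
    [Module A V] [IsScalarTower ℝ A V] [FiniteDimensional ℝ V] (p : Submodule A V) :
    FiniteDimensional ℝ p :=
  FiniteDimensional.finiteDimensional_submodule (p.restrictScalars ℝ)

variable {S T P Q V : Type*} [AddCommGroup S] [Module A S]
  [AddCommGroup T] [Module ℝ T] [Module A T] [IsScalarTower ℝ A T] [SMulCommClass A ℝ T]
  [AddCommGroup P] [Module ℝ P] [Module A P] [IsScalarTower ℝ A P] [SMulCommClass A ℝ P]
  [AddCommGroup Q] [Module ℝ Q] [Module A Q] [IsScalarTower ℝ A Q] [SMulCommClass A ℝ Q]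
  [AddCommGroup V] [Module ℝ V] [Module A V] [IsScalarTower ℝ A V] [SMulCommClass A ℝ V]

theorem HasComplexStructure.linearMap (h : HasComplexStructure A V) :
    HasComplexStructure ℝ (S →ₗ[A] V) := by
  obtain ⟨J, hJ⟩ := h
  refine ⟨LinearMap.compRight ℝ J, LinearMap.ext fun f => LinearMap.ext fun x => ?_⟩
  simpa using congr($hJ (f x))

theorem finrank_linearMap_congr (e : P ≃ₗ[A] Q) :
    finrank ℝ (S →ₗ[A] P) = finrank ℝ (S →ₗ[A] Q) :=
  LinearEquiv.finrank_eq <| .ofLinearMap (LinearMap.compRight ℝ e.toLinearMap)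
    (LinearMap.compRight ℝ e.symm.toLinearMap) (by ext; simp) (by ext; simp)

variable [Module ℝ S] [IsScalarTower ℝ A S]

theorem finrank_linearMap_prod [FiniteDimensional ℝ S] [FiniteDimensional ℝ P]
    [FiniteDimensional ℝ Q] :
    finrank ℝ (S →ₗ[A] P × Q) = finrank ℝ (S →ₗ[A] P) + finrank ℝ (S →ₗ[A] Q) := by
  rw [← (LinearMap.prodEquiv (S := ℝ)).finrank_eq, finrank_prod]

variable [SMulCommClass A ℝ S]

theorem linearMap_eq_zero_of_forall_eq_smul_id [IsSimpleModule A S] [IsSimpleModule A T]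
    (hS : ∀ f : S →ₗ[A] S, ∃ c : ℝ, f = c • LinearMap.id) {d : T →ₗ[A] T}
    (hd : ∀ c : ℝ, d ≠ c • LinearMap.id) (f : S →ₗ[A] T) : f = 0 := by
  by_contra hf
  let ε := LinearEquiv.ofBijective f (LinearMap.bijective_of_ne_zero hf)
  obtain ⟨c, hc⟩ := hS (ε.symm.toLinearMap ∘ₗ d ∘ₗ ε.toLinearMap)
  refine hd c (LinearMap.ext fun x => ?_)
  calc d x = ε (ε.symm (d (ε (ε.symm x)))) := by simp
    _ = ε (c • ε.symm x) := by simpa using congr(ε ($hc (ε.symm x)))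
    _ = c • x := by rw [LinearMapClass.map_smul_of_tower, ε.apply_symm_apply]

theorem IsSimpleModule.hasComplexStructure [IsSimpleModule A S] [FiniteDimensional ℝ S]
    {d : S →ₗ[A] S} (hd : ∀ c : ℝ, d ≠ c • LinearMap.id) : HasComplexStructure A S := by
  classical
  refine exists_mul_self_eq_neg_one (B := Module.End A S) (d := d) ?_
  rintro ⟨c, rfl⟩
  exact hd c rfl

theorem EvenMultiplicities.of_hasComplexStructure [FiniteDimensional ℝ V]
    (h : HasComplexStructure A V) : EvenMultiplicities A V :=
  fun _ _ _ _ _ _ _ _ _ => h.linearMap.even_finrank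

theorem EvenMultiplicities.of_prod_linearEquiv [FiniteDimensional ℝ P] [FiniteDimensional ℝ Q]
    (e : (P × Q) ≃ₗ[A] V) (hV : EvenMultiplicities A V) (hP : EvenMultiplicities A P) :
    EvenMultiplicities A Q := by
  intro S _ _ _ _ _ _ hSimple hS
  have h := hV S hSimple hS
  rw [← finrank_linearMap_congr e, finrank_linearMap_prod] at h
  exact (Nat.even_add.mp h).mp (hP S hSimple hS)

theorem evenMultiplicities_prod_self [FiniteDimensional ℝ P] : EvenMultiplicities A (P × P) := by
  intro S _ _ _ _ _ _ _ _
  rw [finrank_linearMap_prod]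
  exact Even.add_self _

theorem IsSimpleModule.evenMultiplicities [IsSimpleModule A T] {d : T →ₗ[A] T}
    (hd : ∀ c : ℝ, d ≠ c • LinearMap.id) : EvenMultiplicities A T := by
  intro S _ _ _ _ _ _ _ hS
  have : Subsingleton (S →ₗ[A] T) := ⟨fun f g =>
    (linearMap_eq_zero_of_forall_eq_smul_id hS hd f).trans
      (linearMap_eq_zero_of_forall_eq_smul_id hS hd g).symm⟩
  rw [finrank_zero_of_subsingleton]
  exact Even.zero

theorem exists_injective_of_evenMultiplicities {S : Type} [AddCommGroup S] [Module ℝ S]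
    [Module A S] [IsScalarTower ℝ A S] [SMulCommClass A ℝ S] [FiniteDimensional ℝ S]
    [IsSimpleModule A S] [FiniteDimensional ℝ P]
    (hS : ∀ f : S →ₗ[A] S, ∃ c : ℝ, f = c • LinearMap.id) (e : (S × P) ≃ₗ[A] V)
    (hV : EvenMultiplicities A V) : ∃ g : S →ₗ[A] P, Function.Injective g := by
  have := IsSimpleModule.nontrivial A S
  have h := hV S inferInstance hS
  rw [← finrank_linearMap_congr e, finrank_linearMap_prod, finrank_linearMap_self_eq_one hS] at h
  obtain ⟨g, hg⟩ := finrank_pos_iff_exists_ne_zero.mp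
    (Nat.pos_of_ne_zero fun h0 => by rw [h0] at h; exact Nat.not_even_one h)
  exact ⟨g, g.injective_or_eq_zero.resolve_right hg⟩

end

theorem exists_prod_linearEquiv_of_injective {A P V : Type*} [Ring A] [AddCommGroup P]
    [Module A P] [AddCommGroup V] [Module A V] [IsSemisimpleModule A V] (f : P →ₗ[A] V)
    (hf : Function.Injective f) : ∃ Q : Submodule A V, Nonempty ((P × Q) ≃ₗ[A] V) := by
  obtain ⟨Q, hQ⟩ := exists_isCompl (LinearMap.range f)
  exact ⟨Q, ⟨((LinearEquiv.ofInjective f hf).prodCongr (LinearEquiv.refl A Q)).trans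
    (Submodule.prodEquivOfIsCompl _ _ hQ)⟩⟩

theorem EvenMultiplicities.hasComplexStructure {A : Type*} [Ring A] [Algebra ℝ A]
    [IsSemisimpleRing A] {V : Type} [AddCommGroup V] [Module ℝ V] [Module A V]
    [IsScalarTower ℝ A V] [SMulCommClass A ℝ V] [FiniteDimensional ℝ V]
    (hV : EvenMultiplicities A V) : HasComplexStructure A V := by
  induction hn : finrank ℝ V using Nat.strong_induction_on generalizing V with
  | _ n ih =>
  rcases subsingleton_or_nontrivial V with _ | _
  · exact ⟨0, Subsingleton.elim _ _⟩
  obtain ⟨S₀, _⟩ := IsSemisimpleModule.exists_simple_submodule A V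
  have := IsSimpleModule.nontrivial A S₀
  obtain ⟨W, ⟨e⟩⟩ := exists_prod_linearEquiv_of_injective S₀.subtype S₀.injective_subtype
  by_cases hS₀ : ∀ f : S₀ →ₗ[A] S₀, ∃ c : ℝ, f = c • LinearMap.id
  · obtain ⟨g, hg⟩ := exists_injective_of_evenMultiplicities hS₀ e hV
    obtain ⟨W', ⟨e'⟩⟩ := exists_prod_linearEquiv_of_injective g hg
    let e₂ : ((S₀ × S₀) × W') ≃ₗ[A] V :=
      (LinearEquiv.prodAssoc A S₀ S₀ W').trans (((LinearEquiv.refl A S₀).prodCongr e').trans e)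
    have hW' := ih _ ((finrank_lt_of_prod_linearEquiv e₂).trans_eq hn)
      (hV.of_prod_linearEquiv e₂ evenMultiplicities_prod_self) rfl
    exact (hasComplexStructure_prod_self.prod hW').of_linearEquiv e₂
  · push Not at hS₀
    obtain ⟨d, hd⟩ := hS₀
    have hW := ih _ ((finrank_lt_of_prod_linearEquiv e).trans_eq hn)
      (hV.of_prod_linearEquiv e (IsSimpleModule.evenMultiplicities hd)) rfl
    exact ((IsSimpleModule.hasComplexStructure hd).prod hW).of_linearEquiv e

/-- Johnson's criterion: a finite-dimensional real representation `V` of a finite group `G`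
(viewed as a module over the group algebra `ℝ[G]`) admits a `G`-equivariant complex structure
`J` (with `J² = -id`) if and only if every absolutely irreducible component `S` of `V`
(i.e. every simple `ℝG`-module whose equivariant endomorphisms are the real scalars)
occurs in `V` with even multiplicity, the multiplicity being
`dim_ℝ Hom_{ℝG}(S, V)` since `End_{ℝG}(S) = ℝ`. -/
theorem essentially_complex_iff_even_multiplicities
    (G : Type) [Group G] [Fintype G]
    (V : Type) [AddCommGroup V] [Module ℝ V] [Module (MonoidAlgebra ℝ G) V]
    [IsScalarTower ℝ (MonoidAlgebra ℝ G) V] [SMulCommClass (MonoidAlgebra ℝ G) ℝ V]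
    [FiniteDimensional ℝ V] :
    (∃ J : V →ₗ[MonoidAlgebra ℝ G] V, J ∘ₗ J = -LinearMap.id) ↔
    (∀ (S : Type) [AddCommGroup S] [Module ℝ S] [Module (MonoidAlgebra ℝ G) S]
        [IsScalarTower ℝ (MonoidAlgebra ℝ G) S] [SMulCommClass (MonoidAlgebra ℝ G) ℝ S]
        [FiniteDimensional ℝ S],
      IsSimpleModule (MonoidAlgebra ℝ G) S →
      (∀ f : S →ₗ[MonoidAlgebra ℝ G] S, ∃ c : ℝ, f = c • LinearMap.id) →
      Even (Module.finrank ℝ (S →ₗ[MonoidAlgebra ℝ G] V))) :=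
  -- Maschke's theorem provides the instance `IsSemisimpleRing (MonoidAlgebra ℝ G)`.
  ⟨EvenMultiplicities.of_hasComplexStructure, EvenMultiplicities.hasComplexStructure⟩
end

section
/- Let V be a homogeneous real representation of a finite group G whose simple component S satisfies End_{ℝG}(S) ≅ ℝ or End_{ℝG}(S) ≅ ℍ. Then for any two complex structures J, J' on V, the holomorphic parts V_J^{1,0} and V_{J'}^{1,0} are isomorphic ℂG-modules. -/
/-!
It suffices to find a `G`-equivariant real automorphism `U` of `V` with `U J = J' U`: its
complexification then maps the `i`-eigenspace of `J` onto that of `J'`, `G`-equivariantly.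

Let `D = End_G(S)` and `M = Hom_G(S, V)`, a right `D`-module on which `J` and `J'` act by
postcomposition as `D`-linear complex structures. As `V ≅ S^n` with injections `ιᵢ` and
projections `πᵢ`, a `D`-linear endomorphism `φ` of `M` gives the endomorphism `∑ᵢ φ(ιᵢ) ∘ πᵢ` of
`V`; this is multiplicative and inverts postcomposition, so it suffices to conjugate the two
complex structures on `M` by a `D`-linear automorphism.

If `D = ℝ`, complex structures on real spaces of equal dimension are conjugate. If `D = ℍ`, with
`i, j` acting by `A, B`, the involution `K A` anticommutes with `B`, so `M = P ⊕ B P` for its fixed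
space `P`; `K` restricts to a complex structure on `P`, on which `A = -K`, and a conjugation of
these restrictions extends through `B` to an `ℍ`-linear one.
-/

open Module.End

lemma LinearMap.baseChange_comp_eq_of_comp_eq {R A M N : Type*} [CommRing R] [CommRing A]
    [Algebra R A] [AddCommGroup M] [Module R M] [AddCommGroup N] [Module R N] {f : M →ₗ[R] N}
    {g : Module.End R M} {g' : Module.End R N} (h : f ∘ₗ g = g' ∘ₗ f) :
    f.baseChange A ∘ₗ g.baseChange A = g'.baseChange A ∘ₗ f.baseChange A := by
  rw [← baseChange_comp, h, baseChange_comp]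

lemma Module.End.map_eigenspace_of_comp_eq {R M N : Type*} [CommRing R] [AddCommGroup M]
    [Module R M] [AddCommGroup N] [Module R N] (e : M ≃ₗ[R] N) {f : Module.End R M}
    {g : Module.End R N} (h : e.toLinearMap ∘ₗ f = g ∘ₗ e) (μ : R) :
    (f.eigenspace μ).map e.toLinearMap = g.eigenspace μ := by
  ext y
  rw [Submodule.mem_map_equiv, mem_eigenspace_iff, mem_eigenspace_iff, ← e.injective.eq_iff,
    map_smul, e.apply_symm_apply, ← LinearEquiv.coe_toLinearMap, ← LinearMap.comp_apply, h,
    LinearMap.comp_apply, LinearEquiv.coe_toLinearMap, e.apply_symm_apply]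

lemma isScalarTower_compHom_liftAux {H : Type*} [AddCommGroup H] [Module ℝ H]
    {K : Module.End ℝ H} (hK : K * K = -1) :
    letI := Module.compHom H (Complex.liftAux K hK).toRingHom
    IsScalarTower ℝ ℂ H :=
  letI := Module.compHom H (Complex.liftAux K hK).toRingHom
  ⟨fun r z x => show Complex.liftAux K hK (r • z) x = r • Complex.liftAux K hK z x by
    rw [map_smul]; rfl⟩

theorem exists_linearEquiv_conj_of_sq_eq_neg_one {H₁ H₂ : Type*} [AddCommGroup H₁]
    [Module ℝ H₁] [FiniteDimensional ℝ H₁] [AddCommGroup H₂] [Module ℝ H₂] [FiniteDimensional ℝ H₂]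
    {K₁ : Module.End ℝ H₁} {K₂ : Module.End ℝ H₂} (h₁ : ∀ x, K₁ (K₁ x) = -x)
    (h₂ : ∀ x, K₂ (K₂ x) = -x) (hrank : Module.finrank ℝ H₁ = Module.finrank ℝ H₂) :
    ∃ u : H₁ ≃ₗ[ℝ] H₂, ∀ x, u (K₁ x) = K₂ (u x) := by
  have h₁' : K₁ * K₁ = -1 := LinearMap.ext h₁
  have h₂' : K₂ * K₂ = -1 := LinearMap.ext h₂
  -- Make `H₁` and `H₂` complex vector spaces in which `I` acts by `K₁` and `K₂`.
  let := Module.compHom H₁ (Complex.liftAux K₁ h₁').toRingHom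
  let := Module.compHom H₂ (Complex.liftAux K₂ h₂').toRingHom
  have := isScalarTower_compHom_liftAux h₁'
  have := isScalarTower_compHom_liftAux h₂'
  have := FiniteDimensional.right ℝ ℂ H₁
  have := FiniteDimensional.right ℝ ℂ H₂
  have hrankℂ : Module.finrank ℂ H₁ = Module.finrank ℂ H₂ := by
    have e₁ := Module.finrank_mul_finrank ℝ ℂ H₁
    have e₂ := Module.finrank_mul_finrank ℝ ℂ H₂
    rw [Complex.finrank_real_complex] at e₁ e₂
    omega
  obtain ⟨u⟩ := FiniteDimensional.nonempty_linearEquiv_of_finrank_eq hrankℂ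
  have hI₁ (x : H₁) : Complex.I • x = K₁ x := LinearMap.congr_fun (Complex.liftAux_apply_I K₁ h₁') x
  have hI₂ (x : H₂) : Complex.I • x = K₂ x := LinearMap.congr_fun (Complex.liftAux_apply_I K₂ h₂') x
  exact ⟨u.restrictScalars ℝ, fun x => by simpa [hI₁, hI₂] using u.map_smul Complex.I x⟩

section Quaternionic

variable {H : Type*} [AddCommGroup H] [Module ℝ H]

namespace Module.End

lemma mem_eigenspace_one {p : Module.End ℝ H} {x : H} : x ∈ eigenspace p 1 ↔ p x = x := by
  rw [mem_eigenspace_iff, one_smul]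

noncomputable def eigenspaceOneProdEquiv {p B : Module.End ℝ H} (hp : ∀ x, p (p x) = x)
    (hB : ∀ x, B (B x) = -x) (hpB : ∀ x, p (B x) = -B (p x)) :
    (eigenspace p 1 × eigenspace p 1) ≃ₗ[ℝ] H :=
  .ofLinearMap ((eigenspace p 1).subtype.coprod (B ∘ₗ (eigenspace p 1).subtype))
    (.prod (.codRestrict _ ((2⁻¹ : ℝ) • (1 + p)) fun x => by simp [hp, add_comm])
      (.codRestrict _ ((2⁻¹ : ℝ) • (B * p - B)) fun x => by simp [hp, hpB]; abel))
    (by ext x; simp [hB]; module)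
    (by ext ⟨y, hy⟩ <;> rw [mem_eigenspace_one] at hy <;> simp [hy, hpB, hB] <;> module)

lemma eigenspaceOneProdEquiv_apply {p B : Module.End ℝ H} (hp : ∀ x, p (p x) = x)
    (hB : ∀ x, B (B x) = -x) (hpB : ∀ x, p (B x) = -B (p x)) (y z : eigenspace p 1) :
    eigenspaceOneProdEquiv hp hB hpB (y, z) = y + B z :=
  rfl

lemma two_mul_finrank_eigenspace_one [FiniteDimensional ℝ H] {p B : Module.End ℝ H}
    (hp : ∀ x, p (p x) = x) (hB : ∀ x, B (B x) = -x) (hpB : ∀ x, p (B x) = -B (p x)) :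
    2 * Module.finrank ℝ (eigenspace p 1) = Module.finrank ℝ H := by
  rw [← (eigenspaceOneProdEquiv hp hB hpB).finrank_eq, Module.finrank_prod, two_mul]

variable {A B K : Module.End ℝ H}

lemma mul_apply_mul_apply_eq_self (hA : ∀ x, A (A x) = -x) (hK : ∀ x, K (K x) = -x)
    (hKA : ∀ x, K (A x) = A (K x)) (x : H) : (K * A) ((K * A) x) = x := by
  simp [hKA, hK, hA]

lemma mul_apply_eq_neg_apply_mul_apply (hAB : ∀ x, A (B x) = -B (A x))
    (hKB : ∀ x, K (B x) = B (K x)) (x : H) : (K * A) (B x) = -B ((K * A) x) := by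
  simp [hAB, hKB]

lemma apply_eq_neg_of_mem_eigenspace_mul (hK : ∀ x, K (K x) = -x) {y : H}
    (hy : y ∈ eigenspace (K * A) 1) : A y = -K y := by
  rw [mem_eigenspace_one, mul_apply] at hy
  calc A y = -K (K (A y)) := by rw [hK, neg_neg]
    _ = -K y := by rw [hy]

lemma apply_mem_eigenspace_mul (hKA : ∀ x, K (A x) = A (K x)) {y : H}
    (hy : y ∈ eigenspace (K * A) 1) : K y ∈ eigenspace (K * A) 1 := by
  rw [mem_eigenspace_one, mul_apply] at hy ⊢
  rw [← hKA, hy]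

end Module.End

theorem exists_linearEquiv_conj_of_commute_quaternionic [FiniteDimensional ℝ H]
    {A B K K' : Module.End ℝ H}
    (hA : ∀ x, A (A x) = -x) (hB : ∀ x, B (B x) = -x) (hAB : ∀ x, A (B x) = -B (A x))
    (hK : ∀ x, K (K x) = -x) (hKA : ∀ x, K (A x) = A (K x)) (hKB : ∀ x, K (B x) = B (K x))
    (hK' : ∀ x, K' (K' x) = -x) (hK'A : ∀ x, K' (A x) = A (K' x))
    (hK'B : ∀ x, K' (B x) = B (K' x)) :
    ∃ u : H ≃ₗ[ℝ] H, (∀ x, u (K x) = K' (u x)) ∧ (∀ x, u (A x) = A (u x)) ∧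
      ∀ x, u (B x) = B (u x) := by
  have hp := mul_apply_mul_apply_eq_self hA hK hKA
  have hp' := mul_apply_mul_apply_eq_self hA hK' hK'A
  have hpB := mul_apply_eq_neg_apply_mul_apply hAB hKB
  have hp'B := mul_apply_eq_neg_apply_mul_apply hAB hK'B
  let Φ := eigenspaceOneProdEquiv hp hB hpB
  let Φ' := eigenspaceOneProdEquiv hp' hB hp'B
  let Kr := K.restrict fun _ => apply_mem_eigenspace_mul hKA
  let K'r := K'.restrict fun _ => apply_mem_eigenspace_mul hK'A
  obtain ⟨u₀, hu₀⟩ := exists_linearEquiv_conj_of_sq_eq_neg_one (K₁ := Kr) (K₂ := K'r)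
    (fun y => Subtype.ext (hK y)) (fun y => Subtype.ext (hK' y)) <| by
      have := two_mul_finrank_eigenspace_one hp hB hpB
      have := two_mul_finrank_eigenspace_one hp' hB hp'B
      omega
  let u := Φ.symm ≪≫ₗ u₀.prodCongr u₀ ≪≫ₗ Φ'
  have hu (y z : eigenspace (K * A) 1) : u (y + B z) = u₀ y + B (u₀ z) := by
    change Φ' (u₀.prodCongr u₀ (Φ.symm (Φ (y, z)))) = _
    rw [Φ.symm_apply_apply]
    rfl
  have hAy (y : eigenspace (K * A) 1) : A y = -K y := apply_eq_neg_of_mem_eigenspace_mul hK y.2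
  have hAy' (y : eigenspace (K' * A) 1) : A y = -K' y :=
    apply_eq_neg_of_mem_eigenspace_mul hK' y.2
  have hu₀' (y : eigenspace (K * A) 1) : (u₀ (Kr y) : H) = K' (u₀ y) :=
    congrArg Subtype.val (hu₀ y)
  refine ⟨u, fun x => ?_, fun x => ?_, fun x => ?_⟩ <;>
    obtain ⟨⟨y, z⟩, rfl⟩ := Φ.surjective x <;> rw [eigenspaceOneProdEquiv_apply]
  · calc u (K (y + B z)) = u (Kr y + B (Kr z)) := by simp [Kr, hKB]
      _ = K' (u (y + B z)) := by simp [hu, hu₀', hK'B]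
  · calc u (A (y + B z)) = u (↑(-Kr y) + B ↑(Kr z)) := by simp [Kr, hAB, hAy]
      _ = A (u (y + B z)) := by rw [hu, hu]; simp [hu₀', hAB, hAy']
  · calc u (B (y + B z)) = u (↑(-z) + B y) := by rw [map_add, hB, add_comm, Submodule.coe_neg]
      _ = B (u (y + B z)) := by rw [hu, hu, map_add, hB, add_comm, map_neg, Submodule.coe_neg]

end Quaternionic

namespace Representation

section Intertwining

variable {k G U V W : Type*} [CommRing k] [Monoid G] [AddCommGroup U] [Module k U]
  [AddCommGroup V] [Module k V] [AddCommGroup W] [Module k W]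
  {ρU : Representation k G U} {ρV : Representation k G V} {ρW : Representation k G W}

lemma IsIntertwiningMap.comp {f : V →ₗ[k] W} {g : U →ₗ[k] V} (hf : ρV.IsIntertwiningMap ρW f)
    (hg : ρU.IsIntertwiningMap ρV g) : ρU.IsIntertwiningMap ρW (f ∘ₗ g) :=
  ⟨fun x u => by simp [hg.isIntertwining, hf.isIntertwining]⟩

lemma IsIntertwiningMap.sum {ι : Type*} (s : Finset ι) {f : ι → V →ₗ[k] W}
    (hf : ∀ i, ρV.IsIntertwiningMap ρW (f i)) : ρV.IsIntertwiningMap ρW (∑ i ∈ s, f i) :=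
  ⟨fun x v => by simp [LinearMap.sum_apply, (hf _).isIntertwining]⟩

lemma mem_centralizer_range_iff {d : Module.End k V} :
    d ∈ Subalgebra.centralizer k (Set.range fun g => (ρV g : Module.End k V)) ↔
      ρV.IsIntertwiningMap ρV d := by
  simp only [Subalgebra.mem_centralizer_iff, Set.forall_mem_range, LinearMap.ext_iff,
    Module.End.mul_apply, isIntertwiningMap_iff]
  exact ⟨fun h g v => (h g v).symm, fun h g v => (h g v).symm⟩

end Intertwining

section Homogeneous

variable {k G V S : Type*} [CommRing k] [Group G] [AddCommGroup V] [Module k V]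
  [AddCommGroup S] [Module k S] {ρ : Representation k G V} {ρS : Representation k G S}

lemma mem_linHom_invariants_iff {f : S →ₗ[k] V} :
    f ∈ (linHom ρS ρ).invariants ↔ ρS.IsIntertwiningMap ρ f :=
  mem_linHom_invariants_iff_isIntertwining f

variable (ρ ρS) in
/-- `(linHom ρS ρ).invariants` is `Hom_G(S, V)`, and precomposition is the right action of
`End_G(S)` on it. -/
noncomputable def precomp :
    Subalgebra.centralizer k (Set.range fun g => (ρS g : Module.End k S)) →ₗ[k]
      Module.End k (linHom ρS ρ).invariants where
  toFun d := (LinearMap.lcomp k V (d : Module.End k S)).restrict fun f hf =>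
    mem_linHom_invariants_iff.2 <|
      (mem_linHom_invariants_iff.1 hf).comp (mem_centralizer_range_iff.1 d.2)
  map_add' _ _ := by ext; simp
  map_smul' _ _ := by ext; simp

@[simp]
lemma coe_precomp_apply (d) (f : (linHom ρS ρ).invariants) :
    (precomp ρ ρS d f : S →ₗ[k] V) = f ∘ₗ (d : Module.End k S) :=
  rfl

lemma precomp_one : precomp ρ ρS 1 = 1 :=
  rfl

lemma precomp_mul (a b) : precomp ρ ρS (a * b) = precomp ρ ρS b * precomp ρ ρS a :=
  rfl

variable (ρS) in
noncomputable def postcomp (T : Module.End k V) (hT : ρ.IsIntertwiningMap ρ T) :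
    Module.End k (linHom ρS ρ).invariants :=
  (LinearMap.llcomp k S V V T).restrict fun _ hf =>
    mem_linHom_invariants_iff.2 <| hT.comp (mem_linHom_invariants_iff.1 hf)

lemma commute_postcomp_precomp (T : Module.End k V) (hT : ρ.IsIntertwiningMap ρ T) (d) :
    Commute (postcomp ρS T hT) (precomp ρ ρS d) :=
  rfl

lemma postcomp_apply_postcomp_apply {J : Module.End k V} (hJ : ρ.IsIntertwiningMap ρ J)
    (hJJ : J * J = -1) (f : (linHom ρS ρ).invariants) :
    postcomp ρS J hJ (postcomp ρS J hJ f) = -f := by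
  ext s
  exact LinearMap.congr_fun hJJ (f.1 s)

variable (ρ ρS) in
/-- A presentation of `V` as a direct summand of `S^ι`. -/
structure SummandOfPi (ι : Type*) [Fintype ι] where
  inj : ι → (linHom ρS ρ).invariants
  proj : ι → V →ₗ[k] S
  isIntertwiningMap_proj : ∀ i, ρ.IsIntertwiningMap ρS (proj i)
  sum_inj_comp_proj : ∑ i, (inj i : S →ₗ[k] V) ∘ₗ proj i = LinearMap.id

namespace SummandOfPi

variable {ι : Type*} [Fintype ι] (P : SummandOfPi ρ ρS ι)

noncomputable def ofEquivPi [DecidableEq ι] (e : V ≃ₗ[k] (ι → S))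
    (he : ∀ g x i, e (ρ g x) i = ρS g (e x i)) : SummandOfPi ρ ρS ι where
  inj i := ⟨e.symm.toLinearMap ∘ₗ LinearMap.single k (fun _ => S) i,
    mem_linHom_invariants_iff.2 ⟨fun g s => e.injective <| funext fun j => by
      by_cases hij : j = i
      · subst hij; simp [he]
      · simp [he, hij]⟩⟩
  proj i := LinearMap.proj i ∘ₗ e.toLinearMap
  isIntertwiningMap_proj i := ⟨fun g x => he g x i⟩
  sum_inj_comp_proj := by
    ext x
    simp [LinearMap.sum_apply, ← map_sum, Finset.univ_sum_single]

/-- Inverse to `T ↦ postcomp ρS T` on `End_G(S)`-linear maps. -/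
noncomputable def assemble (φ : Module.End k (linHom ρS ρ).invariants) : Module.End k V :=
  ∑ i, (φ (P.inj i) : S →ₗ[k] V) ∘ₗ P.proj i

lemma assemble_isIntertwiningMap (φ : Module.End k (linHom ρS ρ).invariants) :
    ρ.IsIntertwiningMap ρ (P.assemble φ) :=
  IsIntertwiningMap.sum _ fun i =>
    (mem_linHom_invariants_iff.1 (φ (P.inj i)).2).comp (P.isIntertwiningMap_proj i)

lemma assemble_one : P.assemble 1 = LinearMap.id :=
  P.sum_inj_comp_proj

lemma sum_precomp_proj_comp (f : (linHom ρS ρ).invariants) :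
    ∑ i, precomp ρ ρS ⟨P.proj i ∘ₗ f, mem_centralizer_range_iff.2 <|
      (P.isIntertwiningMap_proj i).comp (mem_linHom_invariants_iff.1 f.2)⟩ (P.inj i) = f := by
  ext s
  simpa [LinearMap.sum_apply] using LinearMap.congr_fun P.sum_inj_comp_proj (f.1 s)

lemma assemble_comp {φ : Module.End k (linHom ρS ρ).invariants}
    (hφ : ∀ d, Commute φ (precomp ρ ρS d)) (f : (linHom ρS ρ).invariants) :
    P.assemble φ ∘ₗ (f : S →ₗ[k] V) = (φ f : S →ₗ[k] V) := by
  have hφ' (d) (x) : φ (precomp ρ ρS d x) = precomp ρ ρS d (φ x) :=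
    LinearMap.congr_fun (hφ d).eq x
  conv_rhs => rw [← P.sum_precomp_proj_comp f, map_sum]
  simp only [hφ']
  ext s
  simp [assemble, LinearMap.sum_apply]

lemma assemble_mul {φ : Module.End k (linHom ρS ρ).invariants}
    (hφ : ∀ d, Commute φ (precomp ρ ρS d)) (ψ : Module.End k (linHom ρS ρ).invariants) :
    P.assemble (φ * ψ) = P.assemble φ * P.assemble ψ := by
  calc P.assemble (φ * ψ)
      = ∑ i, (P.assemble φ ∘ₗ (ψ (P.inj i) : S →ₗ[k] V)) ∘ₗ P.proj i := by
        simp only [P.assemble_comp hφ]; rfl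
    _ = P.assemble φ * P.assemble ψ := by
        conv_rhs => arg 2; unfold assemble
        rw [Finset.mul_sum]; rfl

lemma assemble_postcomp (T : Module.End k V) (hT : ρ.IsIntertwiningMap ρ T) :
    P.assemble (postcomp ρS T hT) = T := by
  ext v
  simpa [assemble, LinearMap.sum_apply, postcomp] using
    congrArg T (LinearMap.congr_fun P.sum_inj_comp_proj v)

theorem exists_linearEquiv_conj_of_conj_postcomp (P : SummandOfPi ρ ρS ι) {J J' : Module.End k V}
    (hJ : ρ.IsIntertwiningMap ρ J) (hJ' : ρ.IsIntertwiningMap ρ J')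
    (u : (linHom ρS ρ).invariants ≃ₗ[k] (linHom ρS ρ).invariants)
    (hu : ∀ d, Commute (u : Module.End k (linHom ρS ρ).invariants) (precomp ρ ρS d))
    (huJ : (u : Module.End k (linHom ρS ρ).invariants) * postcomp ρS J hJ =
      postcomp ρS J' hJ' * u) :
    ∃ U : V ≃ₗ[k] V, ρ.IsIntertwiningMap ρ U ∧ U.toLinearMap ∘ₗ J = J' ∘ₗ U := by
  have hu' (d) : Commute (u.symm : Module.End k (linHom ρS ρ).invariants) (precomp ρ ρS d) :=
    LinearMap.ext fun f => u.injective <| by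
      simpa using (LinearMap.congr_fun (hu d).eq (u.symm f)).symm
  refine ⟨.ofLinearMap (P.assemble u) (P.assemble u.symm) ?_ ?_, P.assemble_isIntertwiningMap _, ?_⟩
  · rw [← Module.End.mul_eq_comp, ← P.assemble_mul hu, ← P.assemble_one]
    congr 1
    ext; simp
  · rw [← Module.End.mul_eq_comp, ← P.assemble_mul hu', ← P.assemble_one]
    congr 1
    ext; simp
  · calc P.assemble u * J = P.assemble u * P.assemble (postcomp ρS J hJ) := by
          rw [P.assemble_postcomp]
      _ = P.assemble (postcomp ρS J' hJ' * u) := by rw [← huJ, P.assemble_mul hu]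
      _ = J' * P.assemble u := by
          rw [P.assemble_mul (commute_postcomp_precomp J' hJ'), P.assemble_postcomp]

end SummandOfPi

end Homogeneous

section RealOrQuaternionicType

variable {G V S : Type*} [Group G] [AddCommGroup V] [Module ℝ V] [FiniteDimensional ℝ V]
  [AddCommGroup S] [Module ℝ S] [FiniteDimensional ℝ S] {ρ : Representation ℝ G V}
  {ρS : Representation ℝ G S} {J J' : Module.End ℝ V}

theorem exists_conj_postcomp_of_real_type
    (φ : Subalgebra.centralizer ℝ (Set.range fun g => (ρS g : Module.End ℝ S)) ≃ₐ[ℝ] ℝ)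
    (hJ : ρ.IsIntertwiningMap ρ J) (hJ' : ρ.IsIntertwiningMap ρ J')
    (hJJ : J * J = -1) (hJ'J' : J' * J' = -1) :
    ∃ u : (linHom ρS ρ).invariants ≃ₗ[ℝ] (linHom ρS ρ).invariants,
      (∀ d, Commute (u : Module.End ℝ (linHom ρS ρ).invariants) (precomp ρ ρS d)) ∧
      (u : Module.End ℝ (linHom ρS ρ).invariants) * postcomp ρS J hJ =
        postcomp ρS J' hJ' * u := by
  obtain ⟨u, hu⟩ := exists_linearEquiv_conj_of_sq_eq_neg_one (K₁ := postcomp ρS J hJ)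
    (K₂ := postcomp ρS J' hJ') (postcomp_apply_postcomp_apply hJ hJJ)
    (postcomp_apply_postcomp_apply hJ' hJ'J') rfl
  refine ⟨u, fun d => ?_, LinearMap.ext hu⟩
  have hd : d = algebraMap ℝ _ (φ d) := φ.injective (φ.commutes _).symm
  rw [hd, Algebra.algebraMap_eq_smul_one, map_smul, precomp_one]
  exact (Commute.one_right _).smul_right _

open Quaternion in
theorem exists_conj_postcomp_of_quaternionic_type
    (φ : Subalgebra.centralizer ℝ (Set.range fun g => (ρS g : Module.End ℝ S)) ≃ₐ[ℝ] Quaternion ℝ)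
    (hJ : ρ.IsIntertwiningMap ρ J) (hJ' : ρ.IsIntertwiningMap ρ J')
    (hJJ : J * J = -1) (hJ'J' : J' * J' = -1) :
    ∃ u : (linHom ρS ρ).invariants ≃ₗ[ℝ] (linHom ρS ρ).invariants,
      (∀ d, Commute (u : Module.End ℝ (linHom ρS ρ).invariants) (precomp ρ ρS d)) ∧
      (u : Module.End ℝ (linHom ρS ρ).invariants) * postcomp ρS J hJ =
        postcomp ρS J' hJ' * u := by
  let i : Quaternion ℝ := ⟨0, 1, 0, 0⟩
  let j : Quaternion ℝ := ⟨0, 0, 1, 0⟩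
  have hq (q : Quaternion ℝ) : q = q.re • 1 + q.imI • i + q.imJ • j + q.imK • (i * j) := by
    ext <;> simp <;> simp [i, j]
  let A := precomp ρ ρS (φ.symm i)
  let B := precomp ρ ρS (φ.symm j)
  have hA (f) : A (A f) = -f := by
    rw [← Module.End.mul_apply, ← precomp_mul, ← map_mul,
      show i * i = -1 by ext <;> simp <;> simp [i], map_neg, map_one, map_neg, precomp_one]
    rfl
  have hB (f) : B (B f) = -f := by
    rw [← Module.End.mul_apply, ← precomp_mul, ← map_mul,
      show j * j = -1 by ext <;> simp <;> simp [j], map_neg, map_one, map_neg, precomp_one]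
    rfl
  have hAB (f) : A (B f) = -B (A f) := by
    rw [← Module.End.mul_apply, ← precomp_mul, ← map_mul,
      show j * i = -(i * j) by ext <;> simp <;> simp [i, j], map_neg, map_neg, map_mul,
      precomp_mul]
    rfl
  obtain ⟨u, huK, huA, huB⟩ := exists_linearEquiv_conj_of_commute_quaternionic hA hB hAB
    (postcomp_apply_postcomp_apply hJ hJJ) (fun _ => rfl) (fun _ => rfl)
    (postcomp_apply_postcomp_apply hJ' hJ'J') (fun _ => rfl) (fun _ => rfl)
  refine ⟨u, fun d => ?_, LinearMap.ext huK⟩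
  have cA : Commute (u : Module.End ℝ _) A := LinearMap.ext huA
  have cB : Commute (u : Module.End ℝ _) B := LinearMap.ext huB
  rw [← φ.symm_apply_apply d, hq (φ d)]
  simp only [map_add, map_smul, map_mul, map_one, precomp_mul, precomp_one]
  exact ((((Commute.one_right _).smul_right _).add_right (cA.smul_right _)).add_right
    (cB.smul_right _)).add_right ((cB.mul_right cA).smul_right _)

end RealOrQuaternionicType

end Representation

open scoped TensorProduct

theorem holomorphic_parts_iso_of_real_or_quaternionic_type_general
    {G : Type} [Group G]
    (V : Type) [AddCommGroup V] [Module ℝ V] [FiniteDimensional ℝ V]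
    (ρ : Representation ℝ G V)
    (S : Type) [AddCommGroup S] [Module ℝ S] [FiniteDimensional ℝ S]
    (ρS : Representation ℝ G S)
    -- `V` is homogeneous with simple component `S`
    (hhom : ∃ (n : ℕ) (e : V ≃ₗ[ℝ] (Fin n → S)),
      ∀ (g : G) (x : V) (i : Fin n), e (ρ g x) i = ρS g (e x i))
    -- `End_{ℝG}(S)` is isomorphic to `ℝ` or to the quaternions `ℍ`
    (htype :
      Nonempty ((Subalgebra.centralizer ℝ (Set.range fun g : G => (ρS g : Module.End ℝ S)))
          ≃ₐ[ℝ] ℝ) ∨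
      Nonempty ((Subalgebra.centralizer ℝ (Set.range fun g : G => (ρS g : Module.End ℝ S)))
          ≃ₐ[ℝ] Quaternion ℝ))
    (J J' : V →ₗ[ℝ] V)
    (hJG : ∀ g : G, J ∘ₗ ρ g = ρ g ∘ₗ J) (hJ : J ∘ₗ J = -LinearMap.id)
    (hJ'G : ∀ g : G, J' ∘ₗ ρ g = ρ g ∘ₗ J') (hJ' : J' ∘ₗ J' = -LinearMap.id) :
    ∃ e : Module.End.eigenspace (J.baseChange ℂ) Complex.I ≃ₗ[ℂ]
          Module.End.eigenspace (J'.baseChange ℂ) Complex.I,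
      ∀ (g : G) (x : Module.End.eigenspace (J.baseChange ℂ) Complex.I)
        (hg : (ρ g).baseChange ℂ ↑x ∈ Module.End.eigenspace (J.baseChange ℂ) Complex.I),
        (e ⟨(ρ g).baseChange ℂ ↑x, hg⟩ : ℂ ⊗[ℝ] V) = (ρ g).baseChange ℂ ↑(e x) := by
  obtain ⟨n, e, he⟩ := hhom
  have hJρ : ρ.IsIntertwiningMap ρ J := ⟨fun g => LinearMap.congr_fun (hJG g)⟩
  have hJ'ρ : ρ.IsIntertwiningMap ρ J' := ⟨fun g => LinearMap.congr_fun (hJ'G g)⟩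
  obtain ⟨u, hu, huJ⟩ := htype.elim
    (fun ⟨φ⟩ => Representation.exists_conj_postcomp_of_real_type φ hJρ hJ'ρ hJ hJ')
    (fun ⟨φ⟩ => Representation.exists_conj_postcomp_of_quaternionic_type φ hJρ hJ'ρ hJ hJ')
  obtain ⟨U, hUρ, hUJ⟩ := Representation.SummandOfPi.exists_linearEquiv_conj_of_conj_postcomp
    (.ofEquivPi e he) hJρ hJ'ρ u hu huJ
  have hUρ' (g : G) : U.toLinearMap ∘ₗ ρ g = ρ g ∘ₗ U := LinearMap.ext (hUρ.isIntertwining g)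
  refine ⟨(U.baseChange ℝ ℂ V V).ofSubmodules _ _
    (map_eigenspace_of_comp_eq _ (LinearMap.baseChange_comp_eq_of_comp_eq hUJ) _),
    fun g x hg => ?_⟩
  exact LinearMap.congr_fun (LinearMap.baseChange_comp_eq_of_comp_eq (hUρ' g)) x.1

/-- Let `V` be a homogeneous real representation of a finite group `G` whose simple component
`S` is of real or quaternionic type (`End_{ℝG}(S) ≅ ℝ` or `≅ ℍ`). Then for any two complex
structures `J`, `J'` on `V`, the holomorphic parts `V_J^{1,0}` and `V_{J'}^{1,0}` are
isomorphic `ℂG`-modules. -/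
theorem holomorphic_parts_iso_of_real_or_quaternionic_type
    {G : Type} [Group G] [Fintype G]
    (V : Type) [AddCommGroup V] [Module ℝ V] [FiniteDimensional ℝ V]
    (ρ : Representation ℝ G V)
    (S : Type) [AddCommGroup S] [Module ℝ S] [FiniteDimensional ℝ S] [Nontrivial S]
    (ρS : Representation ℝ G S)
    -- `S` is simple
    (hsimple : ∀ W : Submodule ℝ S, (∀ g : G, ∀ x ∈ W, ρS g x ∈ W) → W = ⊥ ∨ W = ⊤)
    -- `V` is homogeneous with simple component `S`
    (hhom : ∃ (n : ℕ) (e : V ≃ₗ[ℝ] (Fin n → S)),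
      ∀ (g : G) (x : V) (i : Fin n), e (ρ g x) i = ρS g (e x i))
    -- `End_{ℝG}(S)` is isomorphic to `ℝ` or to the quaternions `ℍ`
    (htype :
      Nonempty ((Subalgebra.centralizer ℝ (Set.range fun g : G => (ρS g : Module.End ℝ S)))
          ≃ₐ[ℝ] ℝ) ∨
      Nonempty ((Subalgebra.centralizer ℝ (Set.range fun g : G => (ρS g : Module.End ℝ S)))
          ≃ₐ[ℝ] Quaternion ℝ))
    (J J' : V →ₗ[ℝ] V)
    (hJG : ∀ g : G, J ∘ₗ ρ g = ρ g ∘ₗ J) (hJ : J ∘ₗ J = -LinearMap.id)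
    (hJ'G : ∀ g : G, J' ∘ₗ ρ g = ρ g ∘ₗ J') (hJ' : J' ∘ₗ J' = -LinearMap.id) :
    ∃ e : Module.End.eigenspace (J.baseChange ℂ) Complex.I ≃ₗ[ℂ]
          Module.End.eigenspace (J'.baseChange ℂ) Complex.I,
      ∀ (g : G) (x : Module.End.eigenspace (J.baseChange ℂ) Complex.I)
        (hg : (ρ g).baseChange ℂ ↑x ∈ Module.End.eigenspace (J.baseChange ℂ) Complex.I),
        (e ⟨(ρ g).baseChange ℂ ↑x, hg⟩ : ℂ ⊗[ℝ] V) = (ρ g).baseChange ℂ ↑(e x) :=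
  holomorphic_parts_iso_of_real_or_quaternionic_type_general V ρ S ρS hhom htype J J' hJG hJ hJ'G
    hJ'
end

section
/- Let V be a homogeneous real representation of a finite group G with a complex structure J, and let W ⊆ V be a G-submodule that itself admits a complex structure. Then there exists a complex structure J' on V with J'(W) = W and such that V_J^{1,0} ≅ V_{J'}^{1,0} as ℂG-modules. -/
open scoped TensorProduct

/-!
The `(G, J)`-invariant subspaces of `V` form a complemented lattice (Maschke's theorem, with the
equivariant projection further averaged over `{±1, ±J}`), and all its minimal nonzero members have
the same dimension `c`, which depends only on `S`: a nonzero equivariant `f : T → S` on a minimal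
`T` gives the embedding `x ↦ (f x, -f (J x))` of `T` into `S × S`, which turns `J` into the rotation
`(x, y) ↦ (-y, x)`, and all minimal rotation-stable `G`-subspaces of `S × S` have the same
dimension (either `dim S` or `2 dim S`). The same holds for `W` with its complex structure, so
`c ∣ dim W` and `V` has a `(G, J)`-invariant subspace `U` with `dim U = dim W`.

Since `V` is homogeneous, `G`-invariant subspaces of equal dimension are isomorphic, and so are
their invariant complements; gluing these isomorphisms gives a `G`-automorphism `φ` of `V` with
`φ U = W`. Then `J' = φ J φ⁻¹` preserves `W`, and `φ ⊗ ℂ` maps the `i`-eigenspace of `J` onto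
that of `J'`.
-/

open Module Module.End

namespace Sublattice

variable {α : Type*} [Lattice α] [OrderBot α]

abbrev IsMinimalNonzero (L : Sublattice α) (a : α) : Prop := Minimal (fun b ↦ b ∈ L ∧ b ≠ ⊥) a

theorem exists_isMinimalNonzero_le [WellFoundedLT α] {L : Sublattice α} {a : α} (ha : a ∈ L)
    (ha0 : a ≠ ⊥) : ∃ b ≤ a, L.IsMinimalNonzero b :=
  exists_minimal_le_of_wellFoundedLT _ a ⟨ha, ha0⟩

end Sublattice

namespace Submodule

section Invariant

variable {k X Y : Type*} [DivisionRing k] [AddCommGroup X] [Module k X] [AddCommGroup Y]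
  [Module k Y] {f : X →ₗ[k] Y}

theorem map_mem_invtSubmodule_of_comp_eq {T : End k X} {T' : End k Y} (h : f ∘ₗ T = T' ∘ₗ f)
    {A : Submodule k X} (hA : A ∈ invtSubmodule T) : A.map f ∈ invtSubmodule T' := by
  rintro _ ⟨x, hx, rfl⟩
  exact ⟨T x, hA hx, congr($h x)⟩

theorem comap_mem_invtSubmodule_of_comp_eq {T : End k X} {T' : End k Y} (h : f ∘ₗ T = T' ∘ₗ f)
    {B : Submodule k Y} (hB : B ∈ invtSubmodule T') : B.comap f ∈ invtSubmodule T := by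
  intro x hx
  change f (T x) ∈ B
  rw [← LinearMap.comp_apply, h]
  exact hB hx

theorem isMinimalNonzero_map {L : Sublattice (Submodule k X)} {L' : Sublattice (Submodule k Y)}
    (hmap : ∀ A ∈ L, A.map f ∈ L') (hcomap : ∀ B ∈ L', B.comap f ∈ L) (hbot : ⊥ ∈ L')
    {T : Submodule k X} (hT : L.IsMinimalNonzero T) (hfT : T.map f ≠ ⊥) :
    L'.IsMinimalNonzero (T.map f) ∧ Disjoint T (LinearMap.ker f) := by
  refine ⟨⟨⟨hmap T hT.1.1, hfT⟩, fun B ⟨hB, hB0⟩ hBT ↦ ?_⟩, ?_⟩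
  · obtain ⟨_, hb, hb0⟩ := exists_mem_ne_zero_of_ne_bot hB0
    obtain ⟨t, ht, rfl⟩ := hBT hb
    have hne : T ⊓ B.comap f ≠ ⊥ := fun h ↦ hb0 <| by
      have ht0 : t = 0 := by rw [← mem_bot k, ← h]; exact mem_inf.mpr ⟨ht, hb⟩
      rw [ht0, map_zero]
    exact map_le_iff_le_comap.mpr
      (le_inf_iff.mp (hT.2 ⟨L.infClosed hT.1.1 (hcomap B hB), hne⟩ inf_le_left)).2
  · rw [disjoint_iff]
    by_contra hne
    have hTker := le_inf_iff.mp (hT.2 ⟨L.infClosed hT.1.1 (hcomap ⊥ hbot), hne⟩ inf_le_left)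
    exact hfT (LinearMap.le_ker_iff_map.mp hTker.2)

theorem finrank_map_of_disjoint_ker [FiniteDimensional k X] {T : Submodule k X}
    (h : Disjoint T (LinearMap.ker f)) : finrank k (T.map f) = finrank k T := by
  have hinj : Function.Injective (f ∘ₗ T.subtype) :=
    (LinearMap.disjoint_ker_iff_injOn.mp h).injective
  rw [← LinearMap.finrank_range_of_inj hinj, LinearMap.range_comp, range_subtype]

end Invariant

section Counting

variable {k X : Type*} [DivisionRing k] [AddCommGroup X] [Module k X] [FiniteDimensional k X]

theorem finrank_eq_add_finrank_inf_of_isCompl {T C A : Submodule k X} (hTA : T ≤ A)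
    (hTC : IsCompl T C) : finrank k A = finrank k T + finrank k (C ⊓ A : Submodule k X) := by
  have hsup : T ⊔ C ⊓ A = A := by
    rw [← sup_inf_assoc_of_le C hTA, hTC.sup_eq_top, top_inf_eq]
  have hinf : T ⊓ (C ⊓ A) = ⊥ := (hTC.disjoint.mono_right inf_le_left).eq_bot
  have := finrank_sup_add_finrank_inf_eq T (C ⊓ A)
  rwa [hsup, hinf, finrank_bot, add_zero] at this

variable {L : Sublattice (Submodule k X)} {c : ℕ}

theorem dvd_finrank_of_isMinimalNonzero (hL : ∀ A ∈ L, ∃ C ∈ L, IsCompl A C)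
    (hc : ∀ T, L.IsMinimalNonzero T → finrank k T = c) {A : Submodule k X} (hA : A ∈ L) :
    c ∣ finrank k A := by
  induction hn : finrank k A using Nat.strong_induction_on generalizing A with
  | _ n ih =>
    obtain rfl | hA0 := eq_or_ne A ⊥
    · simp [← hn]
    obtain ⟨T, hTA, hT⟩ := Sublattice.exists_isMinimalNonzero_le hA hA0
    obtain ⟨C, hC, hTC⟩ := hL T hT.1.1
    have hdim : finrank k A = c + finrank k (C ⊓ A : Submodule k X) := by
      rw [finrank_eq_add_finrank_inf_of_isCompl hTA hTC, hc T hT]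
    have hc0 : c ≠ 0 := hc T hT ▸ finrank_eq_zero.not.mpr hT.1.2
    rw [← hn, hdim]
    exact dvd_add dvd_rfl (ih _ (by omega) (L.infClosed hC hA) rfl)

theorem exists_mem_finrank_eq_of_isMinimalNonzero (hbot : ⊥ ∈ L)
    (hL : ∀ A ∈ L, ∃ C ∈ L, IsCompl A C)
    (hc : ∀ T, L.IsMinimalNonzero T → finrank k T = c) {m : ℕ} (hm : c ∣ m)
    (hmX : m ≤ finrank k X) : ∃ U ∈ L, finrank k U = m := by
  obtain ⟨j, rfl⟩ := hm
  induction j with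
  | zero => exact ⟨⊥, hbot, by simp⟩
  | succ j ih =>
    rw [Nat.mul_succ] at hmX ⊢
    obtain ⟨U, hU, hUdim⟩ := ih (by omega)
    obtain ⟨C, hC, hUC⟩ := hL U hU
    have hCdim := finrank_add_eq_of_isCompl hUC
    obtain rfl | hC0 := eq_or_ne C ⊥
    · exact ⟨U, hU, by rw [finrank_bot] at hCdim; omega⟩
    obtain ⟨T, hTC, hT⟩ := Sublattice.exists_isMinimalNonzero_le hC hC0
    refine ⟨U ⊔ T, L.supClosed hU hT.1.1, ?_⟩
    have := finrank_sup_add_finrank_inf_eq U T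
    rwa [(hUC.disjoint.mono_right hTC).eq_bot, finrank_bot, add_zero, hUdim, hc T hT] at this

end Counting

end Submodule

theorem commute_sub_mul_mul_of_mul_self_eq_neg_one {R : Type*} [Ring R] {a j : R}
    (hj : j * j = -1) : Commute (a - j * a * j) j := by
  have h1 : j * a * j * j = -(j * a) := by rw [mul_assoc, hj, mul_neg_one]
  have h2 : j * (j * a * j) = -(a * j) := by
    rw [← mul_assoc, ← mul_assoc, hj, neg_one_mul, neg_mul]
  simp only [Commute, SemiconjBy, sub_mul, mul_sub, h1, h2]
  abel

namespace LinearMap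

variable (k S : Type*) [CommRing k] [AddCommGroup S] [Module k S]

def prodRotation : Module.End k (S × S) := (-snd k S S).prod (fst k S S)

@[simp]
theorem prodRotation_apply (x : S × S) : prodRotation k S x = (-x.2, x.1) := rfl

end LinearMap

namespace Module.End

variable {k A V W : Type*} [CommRing k] [AddCommGroup V] [Module k V] [AddCommGroup W]
  [Module k W]

theorem map_eq_of_comp_self_eq_neg_id {J : End k V} (hJ : J ∘ₗ J = -LinearMap.id)
    {p : Submodule k V} (hp : p ∈ invtSubmodule J) : p.map J = p := by
  refine le_antisymm ((mem_invtSubmodule_iff_map_le J).mp hp)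
    fun x hx ↦ ⟨J (-x), hp (neg_mem hx), ?_⟩
  simpa using congr($hJ (-x))

theorem eigenspace_conj (e : V ≃ₗ[k] W) (f : End k V) (μ : k) :
    eigenspace (e.conj f) μ = (eigenspace f μ).map (e : V →ₗ[k] W) := by
  ext x
  rw [Submodule.mem_map_equiv, mem_eigenspace_iff, mem_eigenspace_iff,
    LinearEquiv.conj_apply_apply, ← e.symm.injective.eq_iff, LinearEquiv.symm_apply_apply,
    map_smul]

variable [CommRing A] [Algebra k A]

theorem baseChange_conj (e : V ≃ₗ[k] W) (f : End k V) :
    (e.conj f).baseChange A = (e.baseChange k A V W).conj (f.baseChange A) := by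
  ext x
  simp [LinearEquiv.conj_apply, LinearMap.baseChange_comp]

end Module.End

namespace Representation

variable {k G X Y S : Type*} [Field k] [Group G] [AddCommGroup X] [Module k X]
  [AddCommGroup Y] [Module k Y] [AddCommGroup S] [Module k S]
  {ρ : Representation k G X} {σ : Representation k G Y} {ρS : Representation k G S}

theorem map_mem_invtSubmodule {f : X →ₗ[k] Y} (hf : ∀ g, f ∘ₗ ρ g = σ g ∘ₗ f)
    {A : Submodule k X} (hA : A ∈ ρ.invtSubmodule) : A.map f ∈ σ.invtSubmodule :=
  σ.mem_invtSubmodule.mpr fun g ↦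
    Submodule.map_mem_invtSubmodule_of_comp_eq (hf g) (ρ.mem_invtSubmodule.mp hA g)

theorem comap_mem_invtSubmodule {f : X →ₗ[k] Y} (hf : ∀ g, f ∘ₗ ρ g = σ g ∘ₗ f)
    {B : Submodule k Y} (hB : B ∈ σ.invtSubmodule) : B.comap f ∈ ρ.invtSubmodule :=
  ρ.mem_invtSubmodule.mpr fun g ↦
    Submodule.comap_mem_invtSubmodule_of_comp_eq (hf g) (σ.mem_invtSubmodule.mp hB g)

variable (ρ) in
abbrev invtSubmoduleWith (J : End k X) : Sublattice (Submodule k X) :=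
  ρ.invtSubmodule ⊓ Module.End.invtSubmodule J

theorem top_mem_invtSubmoduleWith (J : End k X) : ⊤ ∈ ρ.invtSubmoduleWith J :=
  Sublattice.mem_inf.mpr ⟨invtSubmodule.top_mem ρ, Module.End.invtSubmodule.top_mem J⟩

theorem bot_mem_invtSubmoduleWith (J : End k X) : ⊥ ∈ ρ.invtSubmoduleWith J :=
  Sublattice.mem_inf.mpr ⟨invtSubmodule.bot_mem ρ, Module.End.invtSubmodule.bot_mem J⟩

theorem isIrreducible_of_eq_bot_or_eq_top [Nontrivial S]
    (h : ∀ B : Submodule k S, (∀ g, ∀ x ∈ B, ρS g x ∈ B) → B = ⊥ ∨ B = ⊤) :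
    ρS.IsIrreducible where
  exists_pair_ne := ⟨⊥, ⊤, fun h ↦ bot_ne_top congr(Subrepresentation.toSubmodule $h)⟩
  eq_bot_or_eq_top B := (h B.toSubmodule fun g _ hx ↦ B.apply_mem_toSubmodule g hx).imp
    (fun h ↦ Subrepresentation.toSubmodule_injective h)
    (fun h ↦ Subrepresentation.toSubmodule_injective h)

theorem IsIrreducible.eq_bot_or_eq_top_of_mem_invtSubmodule [ρS.IsIrreducible]
    {B : Submodule k S} (hB : B ∈ ρS.invtSubmodule) : B = ⊥ ∨ B = ⊤ := by
  rcases eq_bot_or_eq_top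
    (⟨B, fun g _ hx ↦ ρS.mem_invtSubmodule.mp hB g hx⟩ : Subrepresentation ρS) with h | h
  exacts [.inl congr(Subrepresentation.toSubmodule $h),
    .inr congr(Subrepresentation.toSubmodule $h)]

theorem IsIrreducible.nontrivial [ρS.IsIrreducible] : Nontrivial S := by
  by_contra h
  have := not_nontrivial_iff_subsingleton.mp h
  exact bot_ne_top (α := Subrepresentation ρS)
    (Subrepresentation.toSubmodule_injective (Subsingleton.elim _ _))

variable (ρ) in
abbrev subrepresentationOfMem {A : Submodule k X} (hA : A ∈ ρ.invtSubmodule) :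
    Representation k G A :=
  ρ.subrepresentation A (ρ.mem_invtSubmodule.mp hA)

@[simp]
theorem subrepresentationOfMem_apply_coe {A : Submodule k X} (hA : A ∈ ρ.invtSubmodule) (g : G)
    (x : A) : (ρ.subrepresentationOfMem hA g x : X) = ρ g x :=
  rfl

section Equiv

variable {X₁ X₂ Y₁ Y₂ : Type*} [AddCommGroup X₁] [Module k X₁] [AddCommGroup X₂] [Module k X₂]
  [AddCommGroup Y₁] [Module k Y₁] [AddCommGroup Y₂] [Module k Y₂]
  {ρ₁ : Representation k G X₁} {ρ₂ : Representation k G X₂}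
  {σ₁ : Representation k G Y₁} {σ₂ : Representation k G Y₂}

noncomputable def Equiv.prodCongr (e₁ : ρ₁.Equiv σ₁) (e₂ : ρ₂.Equiv σ₂) :
    (ρ₁.prod ρ₂).Equiv (σ₁.prod σ₂) :=
  .mk (e₁.toLinearEquiv.prodCongr e₂.toLinearEquiv) fun g ↦ by
    ext <;> simp [e₁.toIntertwiningMap.isIntertwining, e₂.toIntertwiningMap.isIntertwining]

variable (ρ) in
noncomputable def prodEquivOfIsCompl {A B : Submodule k X} (hA : A ∈ ρ.invtSubmodule)
    (hB : B ∈ ρ.invtSubmodule) (h : IsCompl A B) :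
    ((ρ.subrepresentationOfMem hA).prod (ρ.subrepresentationOfMem hB)).Equiv ρ :=
  .mk (Submodule.prodEquivOfIsCompl A B h) fun g ↦ by ext <;> simp

theorem Equiv.exists_eigenspace_baseChange_conj_equiv {A : Type*} [CommRing A] [Algebra k A]
    (φ : ρ.Equiv σ) (J : End k X) (μ : A) :
    ∃ e : eigenspace (J.baseChange A) μ ≃ₗ[A] eigenspace ((φ.conj J).baseChange A) μ,
      ∀ (g : G) (x : eigenspace (J.baseChange A) μ)
        (hg : (ρ g).baseChange A ↑x ∈ eigenspace (J.baseChange A) μ),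
        (e ⟨(ρ g).baseChange A ↑x, hg⟩ : A ⊗[k] Y) = (σ g).baseChange A ↑(e x) := by
  set φA := φ.toLinearEquiv.baseChange k A X Y
  have hE : eigenspace ((φ.conj J).baseChange A) μ =
      (eigenspace (J.baseChange A) μ).map (φA : A ⊗[k] X →ₗ[A] A ⊗[k] Y) := by
    rw [Module.End.baseChange_conj, Module.End.eigenspace_conj]
  refine ⟨(φA.submoduleMap _).trans (LinearEquiv.ofEq _ _ hE.symm), fun g x hg ↦ ?_⟩
  have := congr(LinearMap.baseChange A $(φ.toIntertwiningMap.isIntertwining' g))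
  rw [LinearMap.baseChange_comp, LinearMap.baseChange_comp] at this
  exact LinearMap.congr_fun this x

end Equiv

section Complements

variable [Finite G] [CharZero k]

variable (ρ) in
theorem exists_isCompl_mem_invtSubmodule {A : Submodule k X} (hA : A ∈ ρ.invtSubmodule) :
    ∃ C ∈ ρ.invtSubmodule, IsCompl A C := by
  obtain ⟨C, hC⟩ := exists_isCompl (⟨A, fun g _ hx ↦ ρ.mem_invtSubmodule.mp hA g hx⟩ :
    Subrepresentation ρ)
  refine ⟨C.toSubmodule, ρ.mem_invtSubmodule.mpr fun g _ hx ↦ C.apply_mem_toSubmodule g hx,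
    IsCompl.of_eq ?_ ?_⟩
  · exact congrArg Subrepresentation.toSubmodule hC.inf_eq_bot
  · exact congrArg Subrepresentation.toSubmodule hC.sup_eq_top

variable (ρ) in
theorem exists_isCompl_mem_invtSubmoduleWith {J : End k X} (hJG : ∀ g, J ∘ₗ ρ g = ρ g ∘ₗ J)
    (hJ : J ∘ₗ J = -LinearMap.id) {A : Submodule k X} (hA : A ∈ ρ.invtSubmoduleWith J) :
    ∃ C ∈ ρ.invtSubmoduleWith J, IsCompl A C := by
  rw [Sublattice.mem_inf] at hA
  obtain ⟨C₀, hC₀, hAC₀⟩ := ρ.exists_isCompl_mem_invtSubmodule hA.1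
  set π := A.projection C₀ hAC₀
  have hπG (g : G) : Commute π (ρ g) :=
    (LinearMap.IsIdempotentElem.commute_iff (A.isIdempotentElem_projection hAC₀)).mpr
      ⟨by rw [A.range_projection]; exact ρ.mem_invtSubmodule.mp hA.1 g,
        by rw [A.ker_projection]; exact ρ.mem_invtSubmodule.mp hC₀ g⟩
  have hJG' (g : G) : Commute J (ρ g) := hJG g
  -- averaging `π` over the group `{1, J, -1, -J}`
  set π' : End k X := (2⁻¹ : k) • (π - J * π * J)
  have hproj : LinearMap.IsProj A π' := by
    constructor
    · intro x
      exact A.smul_mem _ (A.sub_mem (A.projection_apply_mem hAC₀ x)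
        (hA.2 (A.projection_apply_mem hAC₀ _)))
    · intro x hx
      have h1 : π x = x := A.projection_apply_left hAC₀ ⟨x, hx⟩
      have h2 : π (J x) = J x := A.projection_apply_left hAC₀ ⟨J x, hA.2 hx⟩
      have h3 : J (J x) = -x := by simpa using congr($hJ x)
      simp only [π', LinearMap.smul_apply, LinearMap.sub_apply, Module.End.mul_apply, h1, h2, h3]
      rw [sub_neg_eq_add, ← two_smul k, smul_smul, inv_mul_cancel₀ two_ne_zero, one_smul]
  have hπ'G (g : G) : Commute π' (ρ g) :=
    ((hπG g).sub_left (((hJG' g).mul_left (hπG g)).mul_left (hJG' g))).smul_left _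
  have hπ'J : Commute π' J := (commute_sub_mul_mul_of_mul_self_eq_neg_one hJ).smul_left _
  have hker (T : End k X) (hT : Commute π' T) :
      LinearMap.ker π' ∈ Module.End.invtSubmodule T :=
    (LinearMap.IsIdempotentElem.commute_iff hproj.isIdempotentElem |>.mp hT).2
  exact ⟨LinearMap.ker π', Sublattice.mem_inf.mpr
    ⟨ρ.mem_invtSubmodule.mpr fun g ↦ hker _ (hπ'G g), hker J hπ'J⟩, hproj.isCompl⟩

end Complements

/-- For finite-dimensional `X` and irreducible `ρS`, this says that `X ≅ S ^ n` for some `n`. -/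
def IsCogeneratedBy (ρ : Representation k G X) (ρS : Representation k G S) : Prop :=
  ∀ x, x ≠ 0 → ∃ f : IntertwiningMap ρ ρS, f x ≠ 0

theorem isCogeneratedBy_self : ρS.IsCogeneratedBy ρS := fun _ hx ↦ ⟨.id ρS, hx⟩

theorem IsCogeneratedBy.prod (hρ : ρ.IsCogeneratedBy ρS) (hσ : σ.IsCogeneratedBy ρS) :
    (ρ.prod σ).IsCogeneratedBy ρS := by
  rintro ⟨x, y⟩ hxy
  obtain rfl | hx := eq_or_ne x 0
  · obtain ⟨f, hf⟩ := hσ y fun hy ↦ hxy (by rw [hy, Prod.mk_zero_zero])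
    exact ⟨f.comp (IntertwiningMap.snd k ρ σ), hf⟩
  · obtain ⟨f, hf⟩ := hρ x hx
    exact ⟨f.comp (IntertwiningMap.fst k ρ σ), hf⟩

theorem isCogeneratedBy_of_injective {ι : Type*} {e : X →ₗ[k] ι → S}
    (he : Function.Injective e) (heρ : ∀ g x i, e (ρ g x) i = ρS g (e x i)) :
    ρ.IsCogeneratedBy ρS := by
  intro x hx
  obtain ⟨i, hi⟩ := Function.ne_iff.mp ((map_ne_zero_iff e he).mpr hx)
  exact ⟨⟨LinearMap.proj i ∘ₗ e, fun g ↦ LinearMap.ext fun y ↦ heρ g y i⟩, hi⟩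

theorem IsCogeneratedBy.subrepresentationOfMem (h : ρ.IsCogeneratedBy ρS) {A : Submodule k X}
    (hA : A ∈ ρ.invtSubmodule) : (ρ.subrepresentationOfMem hA).IsCogeneratedBy ρS := by
  intro x hx
  obtain ⟨f, hf⟩ := h x (by simpa using hx)
  exact ⟨⟨f.toLinearMap ∘ₗ A.subtype,
    fun g ↦ LinearMap.ext fun y ↦ LinearMap.congr_fun (f.isIntertwining' g) y⟩, hf⟩

theorem IsCogeneratedBy.nonempty_equiv_of_isMinimalNonzero [ρS.IsIrreducible]
    (h : ρ.IsCogeneratedBy ρS) {T : Submodule k X} (hT : ρ.invtSubmodule.IsMinimalNonzero T) :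
    Nonempty ((ρ.subrepresentationOfMem hT.1.1).Equiv ρS) := by
  obtain ⟨t, ht, ht0⟩ := Submodule.exists_mem_ne_zero_of_ne_bot hT.1.2
  obtain ⟨f, hf⟩ := h t ht0
  have hfT : T.map f.toLinearMap ≠ ⊥ := fun h0 ↦
    hf (by rw [← Submodule.mem_bot k, ← h0]; exact Submodule.mem_map_of_mem ht)
  obtain ⟨hmin, hdisj⟩ := Submodule.isMinimalNonzero_map
    (fun _ ↦ map_mem_invtSubmodule f.isIntertwining')
    (fun _ ↦ comap_mem_invtSubmodule f.isIntertwining') (invtSubmodule.bot_mem _) hT hfT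
  have htop := (IsIrreducible.eq_bot_or_eq_top_of_mem_invtSubmodule hmin.1.1).resolve_left hfT
  refine ⟨.mk (LinearEquiv.ofBijective (f.toLinearMap ∘ₗ T.subtype)
    ⟨(LinearMap.disjoint_ker_iff_injOn.mp hdisj).injective, ?_⟩)
    fun g ↦ LinearMap.ext fun y ↦ LinearMap.congr_fun (f.isIntertwining' g) y⟩
  rw [← LinearMap.range_eq_top, LinearMap.range_comp, Submodule.range_subtype, htop]

section Homogeneous

variable [Finite G] [CharZero k] [ρS.IsIrreducible]

theorem IsCogeneratedBy.nonempty_equiv_of_finrank_eq [FiniteDimensional k X]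
    [FiniteDimensional k Y] (hρ : ρ.IsCogeneratedBy ρS) (hσ : σ.IsCogeneratedBy ρS)
    (h : finrank k X = finrank k Y) : Nonempty (ρ.Equiv σ) := by
  induction hn : finrank k X using Nat.strong_induction_on generalizing X Y with
  | _ n ih =>
  obtain hX | hX := subsingleton_or_nontrivial X
  · have : Subsingleton Y := finrank_zero_iff.mp (h ▸ finrank_zero_of_subsingleton)
    exact ⟨.mk (LinearEquiv.ofFinrankEq _ _ h) fun g ↦ Subsingleton.elim _ _⟩
  have : Nontrivial Y := finrank_pos_iff.mp (h ▸ finrank_pos)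
  obtain ⟨T, -, hT⟩ := Sublattice.exists_isMinimalNonzero_le (invtSubmodule.top_mem ρ) top_ne_bot
  obtain ⟨T', -, hT'⟩ :=
    Sublattice.exists_isMinimalNonzero_le (invtSubmodule.top_mem σ) top_ne_bot
  obtain ⟨eT⟩ := hρ.nonempty_equiv_of_isMinimalNonzero hT
  obtain ⟨eT'⟩ := hσ.nonempty_equiv_of_isMinimalNonzero hT'
  obtain ⟨C, hC, hTC⟩ := ρ.exists_isCompl_mem_invtSubmodule hT.1.1
  obtain ⟨C', hC', hTC'⟩ := σ.exists_isCompl_mem_invtSubmodule hT'.1.1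
  have hdim := Submodule.finrank_add_eq_of_isCompl hTC
  have hdim' := Submodule.finrank_add_eq_of_isCompl hTC'
  have hTpos := Submodule.finrank_eq_zero.not.mpr hT.1.2
  rw [eT.toLinearEquiv.finrank_eq] at hdim hTpos
  rw [eT'.toLinearEquiv.finrank_eq] at hdim'
  obtain ⟨eC⟩ := ih _ (by omega) (hρ.subrepresentationOfMem hC) (hσ.subrepresentationOfMem hC')
    (by omega) rfl
  exact ⟨(ρ.prodEquivOfIsCompl hT.1.1 hC hTC).symm.trans
    (((eT.trans eT'.symm).prodCongr eC).trans (σ.prodEquivOfIsCompl hT'.1.1 hC' hTC'))⟩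

theorem IsCogeneratedBy.exists_equiv_map_eq [FiniteDimensional k X] (hρ : ρ.IsCogeneratedBy ρS)
    {A B : Submodule k X} (hA : A ∈ ρ.invtSubmodule) (hB : B ∈ ρ.invtSubmodule)
    (h : finrank k A = finrank k B) :
    ∃ φ : ρ.Equiv ρ, A.map (φ.toLinearEquiv : X →ₗ[k] X) = B := by
  obtain ⟨A', hA', hAA'⟩ := ρ.exists_isCompl_mem_invtSubmodule hA
  obtain ⟨B', hB', hBB'⟩ := ρ.exists_isCompl_mem_invtSubmodule hB
  have hdim := Submodule.finrank_add_eq_of_isCompl hAA'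
  have hdim' := Submodule.finrank_add_eq_of_isCompl hBB'
  obtain ⟨e⟩ := (hρ.subrepresentationOfMem hA).nonempty_equiv_of_finrank_eq
    (hρ.subrepresentationOfMem hB) h
  obtain ⟨e'⟩ := (hρ.subrepresentationOfMem hA').nonempty_equiv_of_finrank_eq
    (hρ.subrepresentationOfMem hB') (by omega)
  set φ := (ρ.prodEquivOfIsCompl hA hA' hAA').symm.trans
    ((e.prodCongr e').trans (ρ.prodEquivOfIsCompl hB hB' hBB'))
  have hφ (a : A) : φ a = e a := by
    simp [φ, prodEquivOfIsCompl, Equiv.prodCongr]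
  refine ⟨φ, le_antisymm ?_ fun b hb ↦ ⟨e.symm ⟨b, hb⟩, (e.symm ⟨b, hb⟩).2, ?_⟩⟩
  · rintro _ ⟨a, ha, rfl⟩
    change φ a ∈ B
    rw [hφ ⟨a, ha⟩]
    exact (e ⟨a, ha⟩).2
  · simp [hφ]

end Homogeneous

section ComplexStructure

variable [Finite G] [CharZero k] [ρS.IsIrreducible] [FiniteDimensional k S]

theorem finrank_eq_or_eq_top_of_mem_invtSubmodule_prod {Y : Submodule k (S × S)}
    (hY : Y ∈ (ρS.prod ρS).invtSubmodule) (hY0 : Y ≠ ⊥) :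
    finrank k Y = finrank k S ∨ Y = ⊤ := by
  have hS : (ρS.prod ρS).IsCogeneratedBy ρS := isCogeneratedBy_self.prod isCogeneratedBy_self
  obtain ⟨j, hj⟩ := Submodule.dvd_finrank_of_isMinimalNonzero
    (fun _ ↦ (ρS.prod ρS).exists_isCompl_mem_invtSubmodule)
    (fun T hT ↦ (hS.nonempty_equiv_of_isMinimalNonzero hT).some.toLinearEquiv.finrank_eq) hY
  have hle : finrank k Y ≤ finrank k S * 2 := by
    simpa [mul_two] using Submodule.finrank_le Y
  have hpos := Submodule.finrank_eq_zero.not.mpr hY0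
  have := IsIrreducible.nontrivial (ρS := ρS)
  have hj2 : j ≤ 2 := le_of_mul_le_mul_left (hj ▸ hle) finrank_pos
  interval_cases j
  · exact absurd (by simpa using hj) hpos
  · exact .inl (by simpa using hj)
  · exact .inr (Submodule.eq_top_of_finrank_eq (by simp [hj, mul_two]))

theorem finrank_eq_of_isMinimalNonzero_prod {A B : Submodule k (S × S)}
    (hA : ((ρS.prod ρS).invtSubmoduleWith (LinearMap.prodRotation k S)).IsMinimalNonzero A)
    (hB : ((ρS.prod ρS).invtSubmoduleWith (LinearMap.prodRotation k S)).IsMinimalNonzero B) :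
    finrank k A = finrank k B := by
  have key {T} (hT : ((ρS.prod ρS).invtSubmoduleWith
      (LinearMap.prodRotation k S)).IsMinimalNonzero T) (hT' : T ≠ ⊤) :
      finrank k T = finrank k S :=
    (finrank_eq_or_eq_top_of_mem_invtSubmodule_prod (Sublattice.mem_inf.mp hT.1.1).1
      hT.1.2).resolve_right hT'
  rcases eq_or_ne A ⊤ with rfl | hA'
  · rw [le_antisymm le_top (hA.2 hB.1 le_top)]
  rcases eq_or_ne B ⊤ with rfl | hB'
  · rw [le_antisymm le_top (hB.2 hA.1 le_top)]
  rw [key hA hA', key hB hB']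

theorem IsCogeneratedBy.finrank_eq_of_isMinimalNonzero [FiniteDimensional k X]
    (hρ : ρ.IsCogeneratedBy ρS) {J : End k X} (hJG : ∀ g, J ∘ₗ ρ g = ρ g ∘ₗ J)
    (hJ : J ∘ₗ J = -LinearMap.id) {T : Submodule k X}
    (hT : (ρ.invtSubmoduleWith J).IsMinimalNonzero T) {B : Submodule k (S × S)}
    (hB : ((ρS.prod ρS).invtSubmoduleWith (LinearMap.prodRotation k S)).IsMinimalNonzero B) :
    finrank k T = finrank k B := by
  obtain ⟨t, ht, ht0⟩ := Submodule.exists_mem_ne_zero_of_ne_bot hT.1.2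
  obtain ⟨f, hf⟩ := hρ t ht0
  have hfG (g : G) (x : X) : f (ρ g x) = ρS g (f x) := LinearMap.congr_fun (f.isIntertwining' g) x
  have hJG' (g : G) (x : X) : J (ρ g x) = ρ g (J x) := LinearMap.congr_fun (hJG g) x
  have hJJ (x : X) : J (J x) = -x := by simpa using LinearMap.congr_fun hJ x
  set F : X →ₗ[k] S × S := f.toLinearMap.prod (-(f.toLinearMap ∘ₗ J))
  have hFG (g : G) : F ∘ₗ ρ g = (ρS.prod ρS) g ∘ₗ F := by
    ext x <;> simp [F, hfG, hJG']
  have hFJ : F ∘ₗ J = LinearMap.prodRotation k S ∘ₗ F := by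
    ext x <;> simp [F, hJJ]
  have hmap (A) (hA : A ∈ ρ.invtSubmoduleWith J) :
      A.map F ∈ (ρS.prod ρS).invtSubmoduleWith (LinearMap.prodRotation k S) :=
    Sublattice.mem_inf.mpr ⟨map_mem_invtSubmodule hFG (Sublattice.mem_inf.mp hA).1,
      Submodule.map_mem_invtSubmodule_of_comp_eq hFJ (Sublattice.mem_inf.mp hA).2⟩
  have hcomap (B) (hB : B ∈ (ρS.prod ρS).invtSubmoduleWith (LinearMap.prodRotation k S)) :
      B.comap F ∈ ρ.invtSubmoduleWith J :=
    Sublattice.mem_inf.mpr ⟨comap_mem_invtSubmodule hFG (Sublattice.mem_inf.mp hB).1,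
      Submodule.comap_mem_invtSubmodule_of_comp_eq hFJ (Sublattice.mem_inf.mp hB).2⟩
  have hFT : T.map F ≠ ⊥ := fun h0 ↦ hf <| by
    have : F t = 0 := by rw [← Submodule.mem_bot k, ← h0]; exact Submodule.mem_map_of_mem ht
    exact congr($this.1)
  obtain ⟨hmin, hdisj⟩ := Submodule.isMinimalNonzero_map hmap hcomap
    (bot_mem_invtSubmoduleWith _) hT hFT
  rw [← Submodule.finrank_map_of_disjoint_ker hdisj]
  exact finrank_eq_of_isMinimalNonzero_prod hmin hB

theorem IsCogeneratedBy.exists_mem_invtSubmoduleWith_finrank_eq [FiniteDimensional k X]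
    [FiniteDimensional k Y] (hρ : ρ.IsCogeneratedBy ρS) (hσ : σ.IsCogeneratedBy ρS)
    {J : End k X} (hJG : ∀ g, J ∘ₗ ρ g = ρ g ∘ₗ J) (hJ : J ∘ₗ J = -LinearMap.id)
    {J' : End k Y} (hJ'G : ∀ g, J' ∘ₗ σ g = σ g ∘ₗ J') (hJ' : J' ∘ₗ J' = -LinearMap.id)
    (h : finrank k Y ≤ finrank k X) :
    ∃ U ∈ ρ.invtSubmoduleWith J, finrank k U = finrank k Y := by
  have := IsIrreducible.nontrivial (ρS := ρS)
  obtain ⟨B, -, hB⟩ := Sublattice.exists_isMinimalNonzero_le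
    (top_mem_invtSubmoduleWith (ρ := ρS.prod ρS) (LinearMap.prodRotation k S)) top_ne_bot
  have hdvd := Submodule.dvd_finrank_of_isMinimalNonzero
    (fun _ ↦ σ.exists_isCompl_mem_invtSubmoduleWith hJ'G hJ')
    (fun T hT ↦ hσ.finrank_eq_of_isMinimalNonzero hJ'G hJ' hT hB) (top_mem_invtSubmoduleWith J')
  rw [finrank_top] at hdvd
  exact Submodule.exists_mem_finrank_eq_of_isMinimalNonzero (bot_mem_invtSubmoduleWith J)
    (fun _ ↦ ρ.exists_isCompl_mem_invtSubmoduleWith hJG hJ)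
    (fun T hT ↦ hρ.finrank_eq_of_isMinimalNonzero hJG hJ hT hB) hdvd h

end ComplexStructure

end Representation

/-- Let `V` be a homogeneous real representation of a finite group `G` with a complex
structure `J`, and let `W ⊆ V` be a `G`-submodule that itself admits a complex structure.
Then there exists a complex structure `J'` on `V` with `J'(W) = W` and with
`V_J^{1,0} ≅ V_{J'}^{1,0}` as `ℂG`-modules. -/
theorem exists_complex_structure_preserving_submodule
    {G : Type} [Group G] [Fintype G]
    (V : Type) [AddCommGroup V] [Module ℝ V] [FiniteDimensional ℝ V]
    (ρ : Representation ℝ G V)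
    (S : Type) [AddCommGroup S] [Module ℝ S] [FiniteDimensional ℝ S] [Nontrivial S]
    (ρS : Representation ℝ G S)
    -- `S` is simple
    (hsimple : ∀ W : Submodule ℝ S, (∀ g : G, ∀ x ∈ W, ρS g x ∈ W) → W = ⊥ ∨ W = ⊤)
    -- `V` is homogeneous with simple component `S`
    (hhom : ∃ (n : ℕ) (e : V ≃ₗ[ℝ] (Fin n → S)),
      ∀ (g : G) (x : V) (i : Fin n), e (ρ g x) i = ρS g (e x i))
    (J : V →ₗ[ℝ] V)
    (hJG : ∀ g : G, J ∘ₗ ρ g = ρ g ∘ₗ J) (hJ : J ∘ₗ J = -LinearMap.id)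
    (W : Submodule ℝ V) (hWG : ∀ g : G, ∀ x ∈ W, ρ g x ∈ W)
    -- `W` admits a complex structure
    (hWc : ∃ JW : W →ₗ[ℝ] W,
      (∀ (g : G) (x : W) (h : ρ g ↑x ∈ W), (JW ⟨ρ g ↑x, h⟩ : V) = ρ g ↑(JW x)) ∧
      JW ∘ₗ JW = -LinearMap.id) :
    ∃ J' : V →ₗ[ℝ] V,
      (∀ g : G, J' ∘ₗ ρ g = ρ g ∘ₗ J') ∧
      J' ∘ₗ J' = -LinearMap.id ∧
      W.map J' = W ∧
      ∃ e : Module.End.eigenspace (J.baseChange ℂ) Complex.I ≃ₗ[ℂ]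
            Module.End.eigenspace (J'.baseChange ℂ) Complex.I,
        ∀ (g : G) (x : Module.End.eigenspace (J.baseChange ℂ) Complex.I)
          (hg : (ρ g).baseChange ℂ ↑x ∈ Module.End.eigenspace (J.baseChange ℂ) Complex.I),
          (e ⟨(ρ g).baseChange ℂ ↑x, hg⟩ : ℂ ⊗[ℝ] V) = (ρ g).baseChange ℂ ↑(e x) := by
  obtain ⟨n, e, he⟩ := hhom
  obtain ⟨JW, hJWG, hJW⟩ := hWc
  have := Representation.isIrreducible_of_eq_bot_or_eq_top hsimple
  have hW : W ∈ ρ.invtSubmodule := ρ.mem_invtSubmodule.mpr fun g _ hx ↦ hWG g _ hx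
  have hV : ρ.IsCogeneratedBy ρS := Representation.isCogeneratedBy_of_injective e.injective he
  obtain ⟨U, hU, hUW⟩ := hV.exists_mem_invtSubmoduleWith_finrank_eq
    (hV.subrepresentationOfMem hW) hJG hJ (J' := JW)
    (fun g ↦ LinearMap.ext fun x ↦ Subtype.ext (hJWG g x _)) hJW (Submodule.finrank_le W)
  obtain ⟨φ, hφ⟩ := hV.exists_equiv_map_eq (Sublattice.mem_inf.mp hU).1 hW hUW
  have hJ' : φ.conj J ∘ₗ φ.conj J = -LinearMap.id := by
    rw [← LinearEquiv.conj_comp, hJ, map_neg, LinearEquiv.conj_id]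
  refine ⟨φ.conj J, fun g ↦ ?_, hJ', ?_, φ.exists_eigenspace_baseChange_conj_equiv J Complex.I⟩
  · rw [← φ.conj_apply_self g, ← LinearEquiv.conj_comp, ← LinearEquiv.conj_comp, hJG g]
  · rw [← hφ]
    exact Module.End.map_eq_of_comp_self_eq_neg_id hJ'
      (LinearEquiv.map_mem_invtSubmodule_conj_iff.mpr (Sublattice.mem_inf.mp hU).2)
end
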